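/- The function α ↦ φ(Φ⁻¹(α)) is concave on (0,1), where φ is the standard Gaussian density and Φ⁻¹ the inverse of the standard Gaussian CDF. -/

import Mathlib

open Real MeasureTheory Set

/-- Standard normal density φ(z) = (1/√(2π))·exp(-z²/2). -/
noncomputable def gaussPdf (z : ℝ) : ℝ := (Real.sqrt (2 * Real.pi))⁻¹ * Real.exp (-z ^ 2 / 2)

/-- Standard normal CDF Φ(z) = ∫_{-∞}^z φ(t) dt. -/
noncomputable def gaussCdf (z : ℝ) : ℝ := ∫ t in Set.Iic z, gaussPdf t

/-- f(z) = z·Φ(z) + φ(z). -/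
noncomputable def stdF (z : ℝ) : ℝ := z * gaussCdf z + gaussPdf z

/-- Inverse of the standard normal CDF. -/
noncomputable def gaussCdfInv : ℝ → ℝ := Function.invFun gaussCdf

open ProbabilityTheory Filter Topology

/-!
Let `f(z) = z Φ(z) + φ(z)`. Since `φ'(z) = -z φ(z)`, we get `f' = Φ`, so `f` is convex, and at
`z = Φ⁻¹(α)` the tangent line to `f` has slope `α` and intercept `f(z) - α z = φ(z)`. Convexity
puts `f` above this tangent, so `φ(Φ⁻¹(α)) = min_x (f(x) - α x)`: a pointwise minimum of functions
affine in `α`, hence concave.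
-/

lemma concaveOn_of_le_sub_mul {𝕜 : Type*} [Field 𝕜] [LinearOrder 𝕜] [IsStrictOrderedRing 𝕜]
    {s : Set 𝕜} (hs : Convex 𝕜 s) {f g z : 𝕜 → 𝕜}
    (hle : ∀ α ∈ s, ∀ x, g α ≤ f x - α * x) (heq : ∀ α ∈ s, g α = f (z α) - α * z α) :
    ConcaveOn 𝕜 s g := by
  refine ⟨hs, fun a ha b hb μ ν hμ hν hμν => ?_⟩
  set c := μ • a + ν • b
  calc μ • g a + ν • g b ≤ μ * (f (z c) - a * z c) + ν * (f (z c) - b * z c) := by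
        simp only [smul_eq_mul]
        gcongr
        exacts [hle a ha _, hle b hb _]
    _ = f (z c) - c * z c := by
        simp only [c, smul_eq_mul]
        linear_combination f (z c) * hμν
    _ = g c := (heq c (hs ha hb hμ hν hμν)).symm

lemma ConvexOn.add_mul_sub_le_of_hasDerivAt {S : Set ℝ} {f : ℝ → ℝ} {f' x y : ℝ}
    (hf : ConvexOn ℝ S f) (hx : x ∈ S) (hy : y ∈ S) (hfx : HasDerivAt f f' x) :
    f x + f' * (y - x) ≤ f y := by
  rcases lt_trichotomy x y with hxy | rfl | hxy
  · have hslope := hf.le_slope_of_hasDerivAt hx hy hxy hfx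
    rw [slope_def_field, le_div_iff₀ (sub_pos.2 hxy)] at hslope
    linarith
  · simp
  · have hslope := hf.slope_le_of_hasDerivAt hy hx hxy hfx
    rw [slope_def_field, div_le_iff₀ (sub_pos.2 hxy)] at hslope
    linarith

lemma hasDerivAt_integral_Iic {f : ℝ → ℝ} (hf : Continuous f) (hfi : Integrable f) (z : ℝ) :
    HasDerivAt (fun x => ∫ t in Iic x, f t) (f z) z := by
  have hsplit : ∀ x, ∫ t in Iic x, f t = (∫ t in Iic z, f t) + ∫ t in z..x, f t := fun x => by
    rw [← intervalIntegral.integral_Iic_sub_Iic hfi.integrableOn hfi.integrableOn]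
    ring
  rw [funext hsplit]
  exact (intervalIntegral.integral_hasDerivAt_right hfi.intervalIntegrable
    hf.stronglyMeasurable.stronglyMeasurableAtFilter hf.continuousAt).const_add _

lemma Ioo_subset_range_of_tendsto {f : ℝ → ℝ} (hf : Continuous f) {a b : ℝ}
    (ha : Tendsto f atBot (𝓝 a)) (hb : Tendsto f atTop (𝓝 b)) : Ioo a b ⊆ range f := by
  intro y hy
  obtain ⟨x₁, hx₁⟩ := (ha.eventually (gt_mem_nhds hy.1)).exists
  obtain ⟨x₂, hx₂⟩ := (hb.eventually (lt_mem_nhds hy.2)).exists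
  exact intermediate_value_univ x₁ x₂ hf ⟨hx₁.le, hx₂.le⟩

lemma gaussPdf_eq_gaussianPDFReal : gaussPdf = gaussianPDFReal 0 1 := by
  ext z
  simp [gaussPdf, gaussianPDFReal]

lemma gaussCdf_eq_cdf_gaussianReal : gaussCdf = cdf (gaussianReal 0 1) := by
  ext z
  rw [cdf_eq_real, measureReal_def, gaussianReal_apply_eq_integral _ one_ne_zero,
    ENNReal.toReal_ofReal (setIntegral_nonneg measurableSet_Iic fun t _ =>
      gaussianPDFReal_nonneg _ _ t), gaussCdf, gaussPdf_eq_gaussianPDFReal]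

lemma hasDerivAt_gaussPdf (z : ℝ) : HasDerivAt gaussPdf (-z * gaussPdf z) z := by
  refine (((hasDerivAt_pow 2 z).fun_neg.div_const 2).exp.const_mul (√(2 * π))⁻¹).congr_deriv ?_
  simp only [gaussPdf]
  ring

lemma hasDerivAt_gaussCdf (z : ℝ) : HasDerivAt gaussCdf (gaussPdf z) z :=
  hasDerivAt_integral_Iic (by unfold gaussPdf; fun_prop)
    (gaussPdf_eq_gaussianPDFReal ▸ integrable_gaussianPDFReal 0 1) z

lemma monotone_gaussCdf : Monotone gaussCdf :=
  gaussCdf_eq_cdf_gaussianReal ▸ monotone_cdf _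

lemma gaussCdf_gaussCdfInv {α : ℝ} (hα : α ∈ Ioo (0 : ℝ) 1) : gaussCdf (gaussCdfInv α) = α := by
  refine Function.invFun_eq (Ioo_subset_range_of_tendsto ?_ ?_ ?_ hα)
  · exact continuous_iff_continuousAt.2 fun z => (hasDerivAt_gaussCdf z).continuousAt
  · exact gaussCdf_eq_cdf_gaussianReal ▸ tendsto_cdf_atBot _
  · exact gaussCdf_eq_cdf_gaussianReal ▸ tendsto_cdf_atTop _

lemma hasDerivAt_stdF (z : ℝ) : HasDerivAt stdF (gaussCdf z) z := by
  refine (((hasDerivAt_id' z).fun_mul (hasDerivAt_gaussCdf z)).fun_add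
    (hasDerivAt_gaussPdf z)).congr_deriv ?_
  ring

lemma convexOn_stdF : ConvexOn ℝ univ stdF := by
  have hderiv : deriv stdF = gaussCdf := funext fun z => (hasDerivAt_stdF z).deriv
  exact (hderiv ▸ monotone_gaussCdf).convexOn_univ_of_deriv
    fun z => (hasDerivAt_stdF z).differentiableAt

lemma stdF_sub_gaussCdf_mul (z : ℝ) : stdF z - gaussCdf z * z = gaussPdf z := by
  unfold stdF
  ring

theorem stmt_6 : ConcaveOn ℝ (Set.Ioo (0 : ℝ) 1) (fun α => gaussPdf (gaussCdfInv α)) := by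
  have hintercept : ∀ α ∈ Ioo (0 : ℝ) 1,
      gaussPdf (gaussCdfInv α) = stdF (gaussCdfInv α) - α * gaussCdfInv α := fun α hα => by
    rw [← stdF_sub_gaussCdf_mul, gaussCdf_gaussCdfInv hα]
  refine concaveOn_of_le_sub_mul (convex_Ioo 0 1) (fun α hα x => ?_) hintercept
  have htangent := convexOn_stdF.add_mul_sub_le_of_hasDerivAt (mem_univ _) (mem_univ x)
    (hasDerivAt_stdF (gaussCdfInv α))
  rw [gaussCdf_gaussCdfInv hα] at htangent
  linarith [hintercept α hα]
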